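/- Over the ordered alphabet {a<b<c<d}, the words w = bcbabcbcdcbcbbabcbccdccbb and v = cbbabbcbcdccbcbabcbcdcbcb are M-equivalent, neither contains a length-2 factor of non-consecutive letters, yet |w|_{ac} ≠ |v|_{ac} (so they are P-distinct via the projection onto {a,c}). -/

import Mathlib

open List

/-- Number of occurrences of `v` as a scattered subsequence of `w`. -/
def scount {α : Type*} [DecidableEq α] (w v : List α) : ℕ := w.sublists.count v

/-- The quaternary ordered alphabet {a < b < c < d}. -/
inductive ABCD | a | b | c | d
deriving DecidableEq

open ABCD

/-- Position of a letter in the ordering a < b < c < d. -/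
def ord : ABCD → ℕ
  | a => 0
  | b => 1
  | c => 2
  | d => 3

/-- M-equivalence over {a < b < c < d}: agreement on subsequence counts of all
factors of the alphabet word abcd. -/
def MEq4 (w w' : List ABCD) : Prop :=
  scount w [a] = scount w' [a] ∧ scount w [b] = scount w' [b] ∧
  scount w [c] = scount w' [c] ∧ scount w [d] = scount w' [d] ∧
  scount w [a, b] = scount w' [a, b] ∧ scount w [b, c] = scount w' [b, c] ∧
  scount w [c, d] = scount w' [c, d] ∧
  scount w [a, b, c] = scount w' [a, b, c] ∧
  scount w [b, c, d] = scount w' [b, c, d] ∧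
  scount w [a, b, c, d] = scount w' [a, b, c, d]

/-- `w` has no length-2 factor consisting of letters non-consecutive in the ordering. -/
def NoNonconsecFactor (w : List ABCD) : Prop :=
  ¬ ∃ x y : ABCD, [x, y] <:+: w ∧ (ord x + 2 ≤ ord y ∨ ord y + 2 ≤ ord x)

def wEx : List ABCD :=
  [b, c, b, a, b, c, b, c, d, c, b, c, b, b, a, b, c, b, c, c, d, c, c, b, b]

def vEx : List ABCD :=
  [c, b, b, a, b, b, c, b, c, d, c, c, b, c, b, a, b, c, b, c, d, c, b, c, b]

section Subsequences

variable {α : Type*} [DecidableEq α]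

lemma scount_cons_left (x : α) (w v : List α) :
    scount (x :: w) v = scount w v + count v (w.sublists.map (x :: ·)) := by
  rw [scount, (sublists_cons_perm_append x w).count_eq, count_append, scount]

@[simp]
lemma scount_nil_right (w : List α) : scount w [] = 1 := by
  induction w with
  | nil => simp [scount]
  | cons x w ih => rw [scount_cons_left, ih, count_eq_zero.mpr (by simp)]

@[simp]
lemma scount_nil_cons (y : α) (v : List α) : scount [] (y :: v) = 0 := by
  simp [scount]

lemma scount_cons_cons (x y : α) (w v : List α) :
    scount (x :: w) (y :: v) = scount w (y :: v) + if x = y then scount w v else 0 := by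
  rw [scount_cons_left]
  split_ifs with hxy
  · rw [hxy, count_map_of_injective _ _ cons_injective]; rfl
  · rw [count_eq_zero.mpr (by simp [hxy])]

/-- The recursion of `scount_cons_cons` as a definition, so that the kernel can evaluate
subsequence counts without enumerating the `2 ^ w.length` sublists. -/
def scountRec : List α → List α → ℕ
  | _, [] => 1
  | [], _ :: _ => 0
  | x :: w, y :: v => scountRec w (y :: v) + if x = y then scountRec w v else 0

lemma scount_eq_scountRec (w v : List α) : scount w v = scountRec w v := by
  induction w generalizing v with
  | nil => cases v <;> simp [scountRec]
  | cons x w ih => cases v <;> simp [scountRec, scount_cons_cons, ih]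

end Subsequences

instance : Fintype ABCD where
  elems := {a, b, c, d}
  complete x := by cases x <;> decide

theorem stmt_19 :
    MEq4 wEx vEx ∧ NoNonconsecFactor wEx ∧ NoNonconsecFactor vEx ∧
      scount wEx [a, c] ≠ scount vEx [a, c] := by
  simp only [MEq4, NoNonconsecFactor, scount_eq_scountRec]
  decide
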